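/- A pair (X,Y) is a ⟨U,∅⟩-model of P if and only if (X,Y) is a UE-model of P, i.e., X ⊆ Y, Y ⊨ P, X ⊨ P^Y, and for all X' with X ⊊ X' ⊊ Y, X' ⊭ P^Y. -/

import Mathlib

structure Rule (α : Type*) where
  head : Finset α
  pbody : Finset α
  nbody : Finset α
deriving DecidableEq

abbrev Program (α : Type*) := Finset (Rule α)

variable {α : Type*} [DecidableEq α]

/-- An interpretation `Y` satisfies a rule. -/
def satRule (Y : Finset α) (r : Rule α) : Prop :=
  r.pbody ⊆ Y → r.nbody ∩ Y = ∅ → (r.head ∩ Y).Nonempty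

/-- `Y` is a model of the program `P`. -/
def satProg (Y : Finset α) (P : Program α) : Prop := ∀ r ∈ P, satRule Y r

/-- The Gelfond–Lifschitz reduct `P^Y`. -/
def reduct (P : Program α) (Y : Finset α) : Program α :=
  (P.filter (fun r => r.nbody ∩ Y = ∅)).image (fun r => ⟨r.head, r.pbody, ∅⟩)

/-- `Y` is an answer set of `P`: a minimal model of `P^Y`. -/
def isAS (P : Program α) (Y : Finset α) : Prop :=
  satProg Y (reduct P Y) ∧ ∀ Z, Z ⊂ Y → ¬ satProg Z (reduct P Y)

def heads (P : Program α) : Finset α := P.biUnion Rule.head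
def bodies (P : Program α) : Finset α := P.biUnion (fun r => r.pbody ∪ r.nbody)

/-- A positive program: no default negation. -/
def Positive (P : Program α) : Prop := ∀ r ∈ P, r.nbody = ∅

/-- A unary program: only facts `a ←` and rules `a ← b`. -/
def Unary (P : Program α) : Prop :=
  ∀ r ∈ P, r.nbody = ∅ ∧ r.head.card = 1 ∧ r.pbody.card ≤ 1

/-- Membership in the class `C_⟨H,B⟩`. -/
def inClass (H B : Finset α) (P : Program α) : Prop := heads P ⊆ H ∧ bodies P ⊆ B

/-- `V ⪯_H^B Z`. -/
def preceq (H B V Z : Finset α) : Prop := V ∩ H ⊆ Z ∩ H ∧ Z ∩ B ⊆ V ∩ B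

/-- `V ≺_H^B Z`. -/
def prec (H B V Z : Finset α) : Prop := preceq H B V Z ∧ V ∩ (H ∪ B) ≠ Z ∩ (H ∪ B)

/-- `Y` is an `H`-total model of `P`. -/
def Htotal (H : Finset α) (P : Program α) (Y : Finset α) : Prop :=
  satProg Y P ∧ ∀ Z, Z ⊂ Y → satProg Z (reduct P Y) → Z ∩ H ⊂ Y ∩ H

/-- The containment `P ⊆_⟨H,B⟩ Q`. -/
def containsHB (H B : Finset α) (P Q : Program α) : Prop :=
  ∀ R : Program α, inClass H B R → ∀ Y, isAS (P ∪ R) Y → isAS (Q ∪ R) Y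

/-- The equivalence `P ≡_⟨H,B⟩ Q`. -/
def equivHB (H B : Finset α) (P Q : Program α) : Prop :=
  ∀ R : Program α, inClass H B R → ∀ Y, isAS (P ∪ R) Y ↔ isAS (Q ∪ R) Y

/-- A witness against `P ⊆_⟨H,B⟩ Q`. -/
def Witness (H B : Finset α) (P Q : Program α) (X Y : Finset α) : Prop :=
  X ⊆ Y ∧ Htotal H P Y ∧
    (satProg Y Q → X ⊂ Y ∧ satProg X (reduct Q Y) ∧
      ∀ X', preceq H B X X' → X' ⊂ Y → ¬ satProg X' (reduct P Y))

/-- `(X,Y)` is `⪯_H^B`-maximal for `P`. -/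
def maximalHB (H B : Finset α) (P : Program α) (X Y : Finset α) : Prop :=
  satProg X (reduct P Y) ∧ ∀ X', prec H B X X' → X' ⊂ Y → ¬ satProg X' (reduct P Y)

/-- `(X,Y)` is an `⟨H,B⟩`-model of `P`. -/
def HBmodel (H B : Finset α) (P : Program α) (X Y : Finset α) : Prop :=
  X ⊆ Y ∧ Htotal H P Y ∧
    (X ⊂ Y → ∃ X', X' ⊂ Y ∧ X' ∩ (H ∪ B) = X ∧ maximalHB H B P X' Y)

theorem satProg_reduct_self {P : Program α} {Y : Finset α} (h : satProg Y P) :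
    satProg Y (reduct P Y) := by
  intro r hr
  simp only [reduct, Finset.mem_image, Finset.mem_filter] at hr
  obtain ⟨s, ⟨hs, hneg⟩, rfl⟩ := hr
  exact fun hpos _ => h s hs hpos hneg

section Universe

variable [Fintype α]

theorem prec_univ_empty_iff {V Z : Finset α} : prec Finset.univ ∅ V Z ↔ V ⊂ Z := by
  simp only [prec, preceq, Finset.inter_univ, Finset.union_empty, Finset.inter_empty,
    subset_refl, and_true, Finset.ssubset_iff_subset_ne]

theorem htotal_univ_iff {P : Program α} {Y : Finset α} :
    Htotal Finset.univ P Y ↔ satProg Y P := by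
  simp only [Htotal, Finset.inter_univ, and_iff_left_iff_imp]
  exact fun _ _ hZ _ => hZ

theorem maximalHB_univ_empty_iff {P : Program α} {X Y : Finset α} :
    maximalHB Finset.univ ∅ P X Y ↔
      satProg X (reduct P Y) ∧ ∀ X', X ⊂ X' → X' ⊂ Y → ¬ satProg X' (reduct P Y) := by
  simp only [maximalHB, prec_univ_empty_iff]

end Universe

theorem Uempty_models_are_UE_models [Fintype α] (P : Program α) (X Y : Finset α) :
    HBmodel (Finset.univ : Finset α) (∅ : Finset α) P X Y ↔
      X ⊆ Y ∧ satProg Y P ∧ satProg X (reduct P Y) ∧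
        ∀ X', X ⊂ X' → X' ⊂ Y → ¬ satProg X' (reduct P Y) := by
  rw [HBmodel, htotal_univ_iff]
  simp only [Finset.union_empty, Finset.inter_univ, maximalHB_univ_empty_iff]
  refine and_congr_right fun hXY => and_congr_right fun hY =>
    ⟨fun hmax => ?_, fun h hlt => ⟨X, hlt, rfl, h⟩⟩
  rcases hXY.eq_or_ssubset with rfl | hXY
  · -- the last clause of `HBmodel` says nothing when `X = Y`
    exact ⟨satProg_reduct_self hY, fun X' h₁ h₂ => absurd (h₁.trans h₂) (lt_irrefl _)⟩
  · obtain ⟨_, -, rfl, hmaximal⟩ := hmax hXY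
    exact hmaximal
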